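/- Suppose the direct links are blocked (β_{mk} = 0 for all m, k) and covariance matrices factor as R_m = α_m c R and R̃_k = α̃_k c R with c > 0, α_m, α̃_k > 0 and R real symmetric PSD. Then NMSE_{mk}(Φ) = 1 − pτ_p α̃_k T(Φ) / (pτ_p (Σ_{k'∈P_k} α̃_{k'}) T(Φ) + 1/(α_m c²)), where T(Φ) = tr(Φ^H R Φ R), is a strictly decreasing function of T(Φ) > 0; hence the phase-shift matrix Φ minimizing Σ_{m,k} NMSE_{mk} is the one maximizing tr(Φ^H R Φ R), which is achieved by equal phase shifts θ₁ = … = θ_N. -/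

import Mathlib

open Matrix Complex

lemma frac_mono (a b d t₁ t₂ : ℝ) (ha : 0 ≤ a) (hb : 0 ≤ b) (hd : 0 < d)
    (h1 : 0 ≤ t₁) (h12 : t₁ ≤ t₂) :
    a * t₁ / (b * t₁ + d) ≤ a * t₂ / (b * t₂ + d) := by
  have h2 : 0 ≤ t₂ := le_trans h1 h12
  have d1 : 0 < b * t₁ + d := by positivity
  have d2 : 0 < b * t₂ + d := by positivity
  rw [div_le_div_iff₀ d1 d2]
  nlinarith [mul_nonneg (mul_nonneg ha hd.le) (sub_nonneg.2 h12)]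

lemma frac_strict (a b d t₁ t₂ : ℝ) (ha : 0 < a) (hb : 0 ≤ b) (hd : 0 < d)
    (h1 : 0 ≤ t₁) (h12 : t₁ < t₂) :
    a * t₁ / (b * t₁ + d) < a * t₂ / (b * t₂ + d) := by
  have h2 : 0 ≤ t₂ := le_of_lt (lt_of_le_of_lt h1 h12)
  have d1 : 0 < b * t₁ + d := by positivity
  have d2 : 0 < b * t₂ + d := by positivity
  rw [div_lt_div_iff₀ d1 d2]
  nlinarith [mul_pos (mul_pos ha hd) (sub_pos.2 h12)]

lemma trace_eq {N : ℕ} (R : Matrix (Fin N) (Fin N) ℝ) (θ : Fin N → ℝ) :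
    ((Matrix.diagonal fun n => Complex.exp (θ n * Complex.I))ᴴ * R.map Complex.ofReal *
        (Matrix.diagonal fun n => Complex.exp (θ n * Complex.I)) *
        R.map Complex.ofReal).trace
    = ∑ n, ∑ j, Complex.exp (-(θ n) * Complex.I) * R n j * Complex.exp (θ j * Complex.I) * R j n := by
  simp [Matrix.trace, Matrix.mul_apply, Matrix.diag, Matrix.diagonal_conjTranspose,
    Matrix.diagonal_apply, Finset.sum_mul, Finset.mul_sum, Matrix.map_apply, ← Complex.exp_conj,
    mul_comm]

lemma term_re {N : ℕ} (R : Matrix (Fin N) (Fin N) ℝ) (θ : Fin N → ℝ) (n j : Fin N) :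
    (Complex.exp (-(θ n) * Complex.I) * R n j * Complex.exp (θ j * Complex.I) * R j n).re
    = R n j * R j n * Real.cos (θ j - θ n) := by
  have h : Complex.exp (-(θ n) * Complex.I) * (R n j : ℂ) * Complex.exp (θ j * Complex.I) * R j n
      = ((R n j * R j n : ℝ) : ℂ) * Complex.exp (((θ j - θ n : ℝ) : ℂ) * Complex.I) := by
    have : Complex.exp (((θ j - θ n : ℝ) : ℂ) * Complex.I)
        = Complex.exp (-(θ n) * Complex.I) * Complex.exp (θ j * Complex.I) := by
      rw [← Complex.exp_add]
      push_cast
      ring_nf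
    rw [this]
    push_cast
    ring
  rw [h, Complex.re_ofReal_mul, Complex.exp_ofReal_mul_I_re]

lemma trace_re_nonneg {N : ℕ} (X : Matrix (Fin N) (Fin N) ℂ) :
    0 ≤ ((Xᴴ * X).trace).re := by
  have : ((Xᴴ * X).trace) = ∑ n, ∑ j, (starRingEnd ℂ) (X j n) * X j n := by
    simp [Matrix.trace, Matrix.mul_apply, Matrix.conjTranspose_apply, Matrix.diag]
  rw [this, Complex.re_sum]
  refine Finset.sum_nonneg fun n _ => ?_
  rw [Complex.re_sum]
  refine Finset.sum_nonneg fun j _ => ?_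
  simp [Complex.mul_re]
  nlinarith [mul_self_nonneg (X j n).re, mul_self_nonneg (X j n).im]

/-- With blocked direct links and covariances `R_m = α_m c R`, `R̃_k = α̃_k c R`, the NMSE
`NMSE_{mk} = 1 − pτ α̃_k T/(pτ (Σ_{k'∈P_k} α̃_{k'}) T + 1/(α_m c²))`, with
`T(Φ) = tr(Φᴴ R Φ R)`, is strictly decreasing in `T > 0`; hence the sum NMSE is minimized
by the phase configuration maximizing `T`, achieved by equal phase shifts. -/
theorem stmt8 {M K N : ℕ} (p τ c : ℝ) (hp : 0 < p) (hτ : 0 < τ) (hc : 0 < c)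
    (α : Fin M → ℝ) (hα : ∀ m, 0 < α m)
    (αt : Fin K → ℝ) (hαt : ∀ k, 0 < αt k)
    (P : Fin K → Finset (Fin K)) (hP : ∀ k, k ∈ P k)
    (R : Matrix (Fin N) (Fin N) ℝ) (hR : R.PosSemidef)
    (T : (Fin N → ℝ) → ℝ)
    (hT : ∀ θ, T θ =
      (((Matrix.diagonal fun n => Complex.exp (θ n * Complex.I))ᴴ * R.map Complex.ofReal *
        (Matrix.diagonal fun n => Complex.exp (θ n * Complex.I)) *
        R.map Complex.ofReal).trace).re)
    (g : Fin M → Fin K → ℝ → ℝ)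
    (hg : ∀ m k t, g m k t =
      1 - p * τ * αt k * t / (p * τ * (∑ k' ∈ P k, αt k') * t + 1 / (α m * c ^ 2))) :
    (∀ m k t₁ t₂, 0 < t₁ → t₁ < t₂ → g m k t₂ < g m k t₁) ∧
    (∀ θ : Fin N → ℝ, ∀ θ₀ : ℝ,
      ∑ m, ∑ k, g m k (T fun _ => θ₀) ≤ ∑ m, ∑ k, g m k (T θ)) := by
  have hsym : ∀ n j, R j n = R n j := fun n j => by
    have := congrFun (congrFun hR.isHermitian j) n
    simpa [Matrix.conjTranspose_apply] using this.symm
  have hd : ∀ m : Fin M, (0:ℝ) < 1 / (α m * c ^ 2) := fun m => by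
    have := hα m; positivity
  have hb : ∀ k : Fin K, (0:ℝ) ≤ p * τ * ∑ k' ∈ P k, αt k' := fun k =>
    mul_nonneg (by positivity) (Finset.sum_pos (fun i _ => hαt i) ⟨k, hP k⟩).le
  have hTre : ∀ θ, T θ = ∑ n, ∑ j, R n j * R j n * Real.cos (θ j - θ n) := by
    intro θ
    rw [hT, trace_eq, Complex.re_sum]
    refine Finset.sum_congr rfl fun n _ => ?_
    rw [Complex.re_sum]
    exact Finset.sum_congr rfl fun j _ => term_re R θ n j
  constructor
  · intro m k t₁ t₂ ht₁ h12
    rw [hg, hg]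
    have := frac_strict (p * τ * αt k) (p * τ * ∑ k' ∈ P k, αt k')
      (1 / (α m * c ^ 2)) t₁ t₂ (mul_pos (mul_pos hp hτ) (hαt k)) (hb k) (hd m) ht₁.le h12
    linarith
  · intro θ θ₀
    have hT0 : 0 ≤ T θ := by
      obtain ⟨B, hB⟩ : ∃ B : Matrix (Fin N) (Fin N) ℝ, R = Bᴴ * B := by
        open scoped MatrixOrder Matrix.Norms.L2Operator in
        exact CStarAlgebra.nonneg_iff_eq_star_mul_self.mp hR.nonneg
      set C : Matrix (Fin N) (Fin N) ℂ := B.map Complex.ofReal with hC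
      set D : Matrix (Fin N) (Fin N) ℂ :=
        Matrix.diagonal fun n => Complex.exp (θ n * Complex.I) with hD
      have hRC : R.map Complex.ofReal = Cᴴ * C := by
        rw [hB]
        ext i j
        simp [Matrix.mul_apply, Matrix.conjTranspose_apply, Matrix.map_apply, hC]
      have htr : (Dᴴ * R.map Complex.ofReal * D * R.map Complex.ofReal).trace
          = ((C * D * Cᴴ)ᴴ * (C * D * Cᴴ)).trace := by
        rw [hRC]
        simp only [Matrix.conjTranspose_mul, Matrix.conjTranspose_conjTranspose]
        rw [show Dᴴ * (Cᴴ * C) * D * (Cᴴ * C) = (Dᴴ * Cᴴ) * (C * D * Cᴴ * C) by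
          simp only [Matrix.mul_assoc]]
        rw [Matrix.trace_mul_comm]
        rw [show C * D * Cᴴ * C * (Dᴴ * Cᴴ) = (C * D * Cᴴ) * (C * (Dᴴ * Cᴴ)) by
          simp only [Matrix.mul_assoc]]
        rw [Matrix.trace_mul_comm]
      rw [hT, htr]
      exact trace_re_nonneg _
    have hle : T θ ≤ T fun _ => θ₀ := by
      rw [hTre, hTre]
      refine Finset.sum_le_sum fun n _ => Finset.sum_le_sum fun j _ => ?_
      have hsq : 0 ≤ R n j * R j n := by rw [hsym n j]; exact mul_self_nonneg _
      rw [sub_self, Real.cos_zero, mul_one]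
      nlinarith [Real.cos_le_one (θ j - θ n)]
    refine Finset.sum_le_sum fun m _ => Finset.sum_le_sum fun k _ => ?_
    rw [hg, hg]
    have := frac_mono (p * τ * αt k) (p * τ * ∑ k' ∈ P k, αt k')
      (1 / (α m * c ^ 2)) (T θ) (T fun _ => θ₀) (mul_nonneg (by positivity) (hαt k).le)
      (hb k) (hd m) hT0 hle
    linarith
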